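/- With B in canonical block form and B_r := r² D_r B D_{1/r} where D_r = diag(r·I_{m₀}, r³·I_{m₁}, ..., r^{2κ+1}·I_{m_κ}), one has B_r = B for every r > 0 if and only if all blocks B_{j,k} with j ≤ k (the blocks on and above the block diagonal, other than the subdiagonal blocks B₁,...,B_κ) vanish. -/

import Mathlib

/-! The entry `(p, q)` of `B_r` is `B p q` scaled by `r ^ (2 * (blk q - blk p + 1))`, so it is
independent of `r > 0` exactly when that exponent vanishes, i.e. on the subdiagonal blocks
`blk p = blk q + 1`, or when the entry itself is zero. Entries strictly below the subdiagonal are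
zero by assumption, so invariance amounts to the vanishing of the blocks with `blk p ≤ blk q`. -/

theorem forall_pos_zpow_mul_eq_self_iff {K : Type*} [Field K] [LinearOrder K]
    [IsStrictOrderedRing K] {n : ℤ} {x : K} :
    (∀ r : K, 0 < r → r ^ n * x = x) ↔ n = 0 ∨ x = 0 := by
  refine ⟨fun h => or_iff_not_imp_right.2 fun hx => ?_, ?_⟩
  · have h2 : (2 : K) ^ n = 1 := mul_right_cancel₀ hx ((h 2 two_pos).trans (one_mul x).symm)
    exact (zpow_eq_one_iff_right₀ zero_le_two (by norm_num)).1 h2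
  · rintro (rfl | rfl) r _ <;> simp

theorem stmt_8_general (N : ℕ) (blk : Fin N → ℕ)
    (B : Matrix (Fin N) (Fin N) ℝ)
    (hlower : ∀ p q : Fin N, blk q + 1 < blk p → B p q = 0)
    (Br : ℝ → Matrix (Fin N) (Fin N) ℝ)
    (hBr : ∀ (r : ℝ) (p q : Fin N),
      Br r p q = r ^ (2 * ((blk q : ℤ) - (blk p : ℤ) + 1)) * B p q) :
    (∀ r : ℝ, 0 < r → Br r = B) ↔
      (∀ p q : Fin N, blk p ≤ blk q → B p q = 0) := by
  have entry : ∀ p q, (∀ r : ℝ, 0 < r → Br r p q = B p q) ↔ blk p = blk q + 1 ∨ B p q = 0 := by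
    intro p q
    simp only [hBr, forall_pos_zpow_mul_eq_self_iff]
    exact or_congr_left (by omega)
  have entrywise : (∀ r : ℝ, 0 < r → Br r = B) ↔ ∀ p q, blk p = blk q + 1 ∨ B p q = 0 :=
    ⟨fun h p q => (entry p q).1 fun r hr => by rw [h r hr],
      fun h r hr => Matrix.ext fun p q => (entry p q).2 (h p q) r hr⟩
  rw [entrywise]
  refine ⟨fun h p q hpq => (h p q).resolve_left (by omega), fun h p q => ?_⟩
  rcases lt_trichotomy (blk q + 1) (blk p) with hlt | heq | hgt
  · exact .inr (hlower p q hlt)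
  · exact .inl heq.symm
  · exact .inr (h p q (by omega))

/-- With `B` in canonical block form (block index `blk`, entries
strictly below the subdiagonal vanishing) and
`B_r := r² D_r B D_{1/r}`, `D_r = diag(r·I_{m₀}, r³·I_{m₁},...,r^{2κ+1}·I_{m_κ})`,
whose `(p,q)` entry is `r^{2(blk q - blk p + 1)} B p q` (so the subdiagonal
blocks `blk p = blk q + 1` are unscaled), one has `B_r = B` for every `r > 0`
if and only if all blocks `B_{j,k}` with `j ≤ k` (the blocks on and above the
block diagonal) vanish. -/
theorem stmt_8 (N κ : ℕ) (blk : Fin N → ℕ) (hblk : ∀ i, blk i ≤ κ)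
    (B : Matrix (Fin N) (Fin N) ℝ)
    (hlower : ∀ p q : Fin N, blk q + 1 < blk p → B p q = 0)
    (Br : ℝ → Matrix (Fin N) (Fin N) ℝ)
    (hBr : ∀ (r : ℝ) (p q : Fin N),
      Br r p q = r ^ (2 * ((blk q : ℤ) - (blk p : ℤ) + 1)) * B p q) :
    (∀ r : ℝ, 0 < r → Br r = B) ↔
      (∀ p q : Fin N, blk p ≤ blk q → B p q = 0) :=
  stmt_8_general N blk B hlower Br hBr
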